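/- Let S be a graph and v a vertex of S, and let J be the graph on vertices {u, v} (u ∉ V(S)) with the single edge {u,v}. If minrk_q(S − v) = minrk_q(S), then minrk_q(S ∪ J) = minrk_q(S) + 1. -/

import Mathlib

open scoped Classical

/-- A matrix `M` fits the graph `G` if its diagonal entries are nonzero and its
entries at distinct non-adjacent pairs of vertices are zero. -/
def Fits {V F : Type} [Fintype V] [Field F]
    (G : SimpleGraph V) (M : Matrix V V F) : Prop :=
  (∀ u, M u u ≠ 0) ∧ ∀ u v, u ≠ v → ¬ G.Adj u v → M u v = 0

/-- The min-rank of `G` over the field `F`: the minimum rank of a matrix fitting `G`. -/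
noncomputable def minrk (F : Type) [Field F] {V : Type} [Fintype V]
    (G : SimpleGraph V) : ℕ :=
  sInf {r : ℕ | ∃ M : Matrix V V F, Fits G M ∧ M.rank = r}

/-! Adding the pendant vertex `u` to `S = G - u` raises the min-rank by at most one: extend a
fitting matrix of `S` block-diagonally by a `1` at `u`. Conversely, in a matrix `M` fitting `G` the
column of `u` vanishes on `S - v`, so the principal submatrix on `(S - v) ∪ {u}` is block
lower-triangular with invertible corner `M u u`; its rank, at most `rank M`, is therefore
`rank (M|_{S - v}) + 1 ≥ minrk (S - v) + 1 = minrk S + 1`. -/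

theorem LinearMap.finrank_range_prodMap {K M₁ M₂ M₃ M₄ : Type*} [DivisionRing K]
    [AddCommGroup M₁] [AddCommGroup M₂] [AddCommGroup M₃] [AddCommGroup M₄]
    [Module K M₁] [Module K M₂] [Module K M₃] [Module K M₄]
    [FiniteDimensional K M₃] [FiniteDimensional K M₄]
    (f : M₁ →ₗ[K] M₃) (g : M₂ →ₗ[K] M₄) :
    Module.finrank K (range (f.prodMap g)) =
      Module.finrank K (range f) + Module.finrank K (range g) := by
  have hfactor : f.prodMap g =
      (f.range.subtype.prodMap g.range.subtype) ∘ₗ (f.rangeRestrict.prodMap g.rangeRestrict) :=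
    rfl
  have hsurj : range (f.rangeRestrict.prodMap g.rangeRestrict) = ⊤ := by
    simp [range_prodMap, range_rangeRestrict]
  rw [hfactor, range_comp_of_range_eq_top _ hsurj,
    finrank_range_of_inj (Prod.map_injective.2 ⟨Subtype.val_injective, Subtype.val_injective⟩),
    Module.finrank_prod]

namespace Matrix

variable {K m n : Type*} [Field K] [Fintype m] [Fintype n] [DecidableEq m] [DecidableEq n]

theorem rank_fromBlocks_zero₁₂_zero₂₁ (A : Matrix m m K) (D : Matrix n n K) :
    (fromBlocks A 0 0 D).rank = A.rank + D.rank := by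
  set b := (Pi.basisFun K m).prod (Pi.basisFun K n)
  have h : fromBlocks A 0 0 D = LinearMap.toMatrix b b (A.toLin'.prodMap D.toLin') := by
    rw [LinearMap.toMatrix_prodMap, LinearMap.toMatrix_eq_toMatrix',
      LinearMap.toMatrix_eq_toMatrix', LinearMap.toMatrix'_toLin', LinearMap.toMatrix'_toLin']
  rw [rank_eq_finrank_range_toLin _ b b, h, toLin_toMatrix, LinearMap.finrank_range_prodMap]
  rfl

theorem rank_fromBlocks_zero₁₂_of_isUnit_det (A : Matrix m m K) (C : Matrix n m K)
    (D : Matrix n n K) (hD : IsUnit D.det) :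
    (fromBlocks A 0 C D).rank = A.rank + Fintype.card n := by
  have : Invertible D := D.invertibleOfIsUnitDet hD
  have hfactor : fromBlocks A 0 C D = fromBlocks A 0 0 D * fromBlocks 1 0 (⅟D * C) 1 := by
    simp [fromBlocks_multiply, ← Matrix.mul_assoc]
  have hunit : IsUnit (fromBlocks (1 : Matrix m m K) 0 (⅟D * C) 1).det := by simp
  rw [hfactor, rank_mul_eq_left_of_isUnit_det _ _ hunit, rank_fromBlocks_zero₁₂_zero₂₁,
    rank_of_isUnit D (D.isUnit_iff_isUnit_det.2 hD)]

end Matrix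

section Minrk

variable {V F : Type} [Fintype V] [Field F] {G : SimpleGraph V}

theorem fits_one (G : SimpleGraph V) : Fits G (1 : Matrix V V F) :=
  ⟨fun _ => by simp, fun _ _ hxy _ => Matrix.one_apply_ne hxy⟩

theorem exists_fits_rank_eq_minrk (G : SimpleGraph V) :
    ∃ M : Matrix V V F, Fits G M ∧ M.rank = minrk F G :=
  Nat.sInf_mem (s := {r | ∃ M : Matrix V V F, Fits G M ∧ M.rank = r}) ⟨_, 1, fits_one G, rfl⟩

theorem Fits.minrk_le_rank {M : Matrix V V F} (hM : Fits G M) : minrk F G ≤ M.rank :=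
  Nat.sInf_le ⟨M, hM, rfl⟩

theorem Fits.induce {M : Matrix V V F} (hM : Fits G M) (s : Set V) [Fintype s] :
    Fits (G.induce s) (M.submatrix (↑) (↑)) :=
  ⟨fun x => hM.1 x, fun x y hxy hadj => hM.2 x y (Subtype.coe_injective.ne hxy) hadj⟩

theorem Fits.fromBlocks_one {s : Set V} [Fintype s] {N : Matrix s s F}
    (hN : Fits (G.induce s) N) :
    Fits G ((Matrix.fromBlocks N 0 0 (1 : Matrix (sᶜ : Set V) (sᶜ : Set V) F)).submatrix
      (Equiv.Set.sumCompl s).symm (Equiv.Set.sumCompl s).symm) := by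
  constructor
  · intro x
    obtain ⟨x | x, rfl⟩ := (Equiv.Set.sumCompl s).surjective x <;> simp [hN.1]
  · intro x y hxy hadj
    obtain ⟨x | x, rfl⟩ := (Equiv.Set.sumCompl s).surjective x <;>
    obtain ⟨y | y, rfl⟩ := (Equiv.Set.sumCompl s).surjective y <;>
    simp only [Equiv.Set.sumCompl_apply_inl, Equiv.Set.sumCompl_apply_inr, ne_eq,
      Matrix.submatrix_apply, Equiv.Set.sumCompl_symm_apply, Equiv.Set.sumCompl_symm_apply_compl,
      Matrix.fromBlocks_apply₁₁, Matrix.fromBlocks_apply₁₂, Matrix.fromBlocks_apply₂₁,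
      Matrix.fromBlocks_apply₂₂, Matrix.zero_apply] at hxy hadj ⊢
    · exact hN.2 x y (ne_of_apply_ne Subtype.val hxy) hadj
    · exact Matrix.one_apply_ne (ne_of_apply_ne Subtype.val hxy)

theorem minrk_le_minrk_induce_add_card (G : SimpleGraph V) (s : Set V) [Fintype s]
    [Fintype (sᶜ : Set V)] :
    minrk F G ≤ minrk F (G.induce s) + Fintype.card (sᶜ : Set V) := by
  obtain ⟨N, hN, hrank⟩ := exists_fits_rank_eq_minrk (F := F) (G.induce s)
  calc minrk F G ≤ _ := hN.fromBlocks_one.minrk_le_rank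
    _ = minrk F (G.induce s) + Fintype.card (sᶜ : Set V) := by
      rw [Matrix.rank_submatrix, Matrix.rank_fromBlocks_zero₁₂_zero₂₁, hrank, Matrix.rank_one]

theorem minrk_induce_add_one_le {u : V} {s : Set V} [Fintype s] (hu : u ∉ s)
    (hnadj : ∀ x ∈ s, ¬ G.Adj x u) : minrk F (G.induce s) + 1 ≤ minrk F G := by
  obtain ⟨M, hM, hrank⟩ := exists_fits_rank_eq_minrk (F := F) G
  set e : s ⊕ Unit → V := Sum.elim (↑) fun _ => u
  set N : Matrix s s F := M.submatrix (↑) (↑)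
  have hblocks : M.submatrix e e = Matrix.fromBlocks N 0
      (Matrix.of fun _ y => M u y) (Matrix.of fun _ _ => M u u) := by
    ext (x | _) (y | _)
    · rfl
    · exact hM.2 x u (ne_of_mem_of_not_mem x.2 hu) (hnadj x x.2)
    · rfl
    · rfl
  have hunit : IsUnit (Matrix.of fun (_ : Unit) (_ : Unit) => M u u).det := by
    simpa using hM.1 u
  calc minrk F (G.induce s) + 1 ≤ N.rank + 1 :=
        Nat.add_le_add_right ((hM.induce s).minrk_le_rank) 1
    _ = (M.submatrix e e).rank := by
        rw [hblocks, Matrix.rank_fromBlocks_zero₁₂_of_isUnit_det _ _ _ hunit, Fintype.card_unit]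
    _ ≤ M.rank := Matrix.rank_submatrix_le M e e
    _ = minrk F G := hrank

end Minrk

theorem minrk_pendant_edge_general {V F : Type} [Fintype V] [Field F]
    (G : SimpleGraph V) (u v : V)
    (hpendant : ∀ b, G.Adj u b → b = v)
    (h : minrk F (G.induce (({u}ᶜ : Set V) \ {v})) = minrk F (G.induce ({u}ᶜ : Set V))) :
    minrk F G = minrk F (G.induce ({u}ᶜ : Set V)) + 1 := by
  refine le_antisymm ?_ ?_
  · simpa using minrk_le_minrk_induce_add_card (F := F) G {u}ᶜ
  · rw [← h]
    refine minrk_induce_add_one_le (u := u) (by simp) fun x hx hadj => ?_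
    exact hx.2 (hpendant x hadj.symm)

theorem minrk_pendant_edge {V F : Type} [Fintype V] [Field F] [Fintype F]
    (G : SimpleGraph V) (u v : V) (huv : u ≠ v)
    (hadj : G.Adj u v)
    (hpendant : ∀ b, G.Adj u b → b = v)
    (h : minrk F (G.induce (({u}ᶜ : Set V) \ {v})) = minrk F (G.induce ({u}ᶜ : Set V))) :
    minrk F G = minrk F (G.induce ({u}ᶜ : Set V)) + 1 :=
  minrk_pendant_edge_general G u v hpendant h
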